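/- Let ν₁, ν₂ : ℝ → (0,∞) be weights with m_i(r) = ∫_{−r}^{r} νᵢ → ∞, and suppose the quotient ν₁/ν₂ is bounded above and bounded below away from 0. Then a bounded continuous function φ : ℝ → ℝⁿ satisfies (1/m₁(r)) ∫_{−r}^{r} ‖φ‖ ν₁ → 0 if and only if (1/m₂(r)) ∫_{−r}^{r} ‖φ‖ ν₂ → 0; consequently WPAA(ℝ,ν₁) = WPAA(ℝ,ν₂). -/

import Mathlib

/-! If `a ν₂ ≤ ν₁ ≤ b ν₂` pointwise, integrating over `[-r, r]` shows that the `ν₂`-mean of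
`‖φ‖` is at most `b / a` times its `ν₁`-mean. The hypotheses are symmetric in `ν₁, ν₂` (with
`b⁻¹, a⁻¹` in place of `a, b`), so the two means tend to `0` together. -/

open Filter MeasureTheory

def AlmostAutomorphic {n : ℕ} (f : ℝ → (Fin n → ℝ)) : Prop :=
  ∀ s : ℕ → ℝ, ∃ φ : ℕ → ℕ, StrictMono φ ∧ ∃ g : ℝ → (Fin n → ℝ),
    (∀ t : ℝ, Tendsto (fun k => f (t + s (φ k))) atTop (nhds (g t))) ∧
    (∀ t : ℝ, Tendsto (fun k => g (t - s (φ k))) atTop (nhds (f t)))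

/-- the weighted ergodic space `WPAA₀(ℝ, ν)`. -/
def WPAA0 {n : ℕ} (ν : ℝ → ℝ) (φ : ℝ → (Fin n → ℝ)) : Prop :=
  Continuous φ ∧ (∃ C : ℝ, ∀ t, ‖φ t‖ ≤ C) ∧
  Tendsto (fun r : ℝ =>
      (∫ s in (-r)..r, ‖φ s‖ * ν s) / (∫ s in (-r)..r, ν s)) atTop (nhds 0)

/-- `ν` is a bounded weight with positive infimum whose mass tends to infinity. -/
def WeightUB (ν : ℝ → ℝ) : Prop :=
  (∀ s, 0 < ν s) ∧ LocallyIntegrable ν volume ∧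
  (∃ b : ℝ, ∀ s, ν s ≤ b) ∧ (∃ a : ℝ, 0 < a ∧ ∀ s, a ≤ ν s) ∧
  Tendsto (fun r : ℝ => ∫ s in (-r)..r, ν s) atTop atTop

open Topology

noncomputable def weightedMean (ν f : ℝ → ℝ) (r : ℝ) : ℝ :=
  (∫ s in (-r)..r, f s * ν s) / ∫ s in (-r)..r, ν s

theorem MeasureTheory.LocallyIntegrable.intervalIntegrable {E : Type*} [NormedAddCommGroup E]
    {f : ℝ → E} {μ : Measure ℝ} [IsLocallyFiniteMeasure μ] (hf : LocallyIntegrable f μ)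
    (a b : ℝ) : IntervalIntegrable f μ a b :=
  (hf.integrableOn_isCompact isCompact_uIcc).intervalIntegrable

section Comparable

variable {f μ ν : ℝ → ℝ} {a b : ℝ}

theorem weightedMean_nonneg (hf : ∀ s, 0 ≤ f s) (hν : ∀ s, 0 ≤ ν s) {r : ℝ} (hr : 0 ≤ r) :
    0 ≤ weightedMean ν f r := by
  have hrr : -r ≤ r := neg_le_self hr
  exact div_nonneg (intervalIntegral.integral_nonneg hrr fun s _ => mul_nonneg (hf s) (hν s))
    (intervalIntegral.integral_nonneg hrr fun s _ => hν s)

theorem weightedMean_le_mul_weightedMean (hf : Continuous f) (hf₀ : ∀ s, 0 ≤ f s)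
    (hμ : ∀ s, 0 < μ s) (hμi : LocallyIntegrable μ volume) (hνi : LocallyIntegrable ν volume)
    (ha : 0 < a) (hlo : ∀ s, a * μ s ≤ ν s) (hhi : ∀ s, ν s ≤ b * μ s) {r : ℝ} (hr : 0 < r) :
    weightedMean μ f r ≤ b / a * weightedMean ν f r := by
  have hrr : -r ≤ r := by linarith
  have hb : 0 < b := pos_of_mul_pos_left ((mul_pos ha (hμ 0)).trans_le ((hlo 0).trans (hhi 0)))
    (hμ 0).le
  have hfμ := (hμi.intervalIntegrable (-r) r).continuousOn_mul hf.continuousOn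
  have hfν := (hνi.intervalIntegrable (-r) r).continuousOn_mul hf.continuousOn
  have hnum : ∫ s in (-r)..r, f s * μ s ≤ (∫ s in (-r)..r, f s * ν s) / a := by
    rw [← intervalIntegral.integral_div]
    refine intervalIntegral.integral_mono_on hrr hfμ (hfν.div_const a) fun s _ => ?_
    rw [le_div_iff₀ ha, mul_assoc, mul_comm (μ s)]
    exact mul_le_mul_of_nonneg_left (hlo s) (hf₀ s)
  have hden : (∫ s in (-r)..r, ν s) / b ≤ ∫ s in (-r)..r, μ s := by
    rw [← intervalIntegral.integral_div]
    refine intervalIntegral.integral_mono_on hrr ((hνi.intervalIntegrable _ _).div_const b)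
      (hμi.intervalIntegrable _ _) fun s _ => ?_
    rw [div_le_iff₀ hb, mul_comm]
    exact hhi s
  have hνpos : 0 < ∫ s in (-r)..r, ν s :=
    intervalIntegral.intervalIntegral_pos_of_pos_on (hνi.intervalIntegrable _ _)
      (fun s _ => (mul_pos ha (hμ s)).trans_le (hlo s)) (by linarith)
  have hνnum : 0 ≤ ∫ s in (-r)..r, f s * ν s :=
    intervalIntegral.integral_nonneg hrr fun s _ =>
      mul_nonneg (hf₀ s) ((mul_pos ha (hμ s)).le.trans (hlo s))
  calc weightedMean μ f r
      ≤ ((∫ s in (-r)..r, f s * ν s) / a) / ((∫ s in (-r)..r, ν s) / b) :=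
        div_le_div₀ (div_nonneg hνnum ha.le) hnum (div_pos hνpos hb) hden
    _ = b / a * weightedMean ν f r := by
        unfold weightedMean
        field_simp

theorem tendsto_weightedMean_zero_of_comparable (hf : Continuous f) (hf₀ : ∀ s, 0 ≤ f s)
    (hμ : ∀ s, 0 < μ s) (hμi : LocallyIntegrable μ volume) (hνi : LocallyIntegrable ν volume)
    (ha : 0 < a) (hlo : ∀ s, a * μ s ≤ ν s) (hhi : ∀ s, ν s ≤ b * μ s)
    (hν : Tendsto (weightedMean ν f) atTop (𝓝 0)) :
    Tendsto (weightedMean μ f) atTop (𝓝 0) := by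
  refine squeeze_zero' ?_ ?_ (by simpa using hν.const_mul (b / a))
  · filter_upwards [eventually_ge_atTop 0] with r hr
    exact weightedMean_nonneg hf₀ (fun s => (hμ s).le) hr
  · filter_upwards [eventually_gt_atTop 0] with r hr
    exact weightedMean_le_mul_weightedMean hf hf₀ hμ hμi hνi ha hlo hhi hr

theorem tendsto_weightedMean_zero_iff_of_comparable (hf : Continuous f) (hf₀ : ∀ s, 0 ≤ f s)
    (hμ : ∀ s, 0 < μ s) (hμi : LocallyIntegrable μ volume) (hνi : LocallyIntegrable ν volume)
    (ha : 0 < a) (hlo : ∀ s, a * μ s ≤ ν s) (hhi : ∀ s, ν s ≤ b * μ s) :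
    Tendsto (weightedMean ν f) atTop (𝓝 0) ↔ Tendsto (weightedMean μ f) atTop (𝓝 0) := by
  have hν : ∀ s, 0 < ν s := fun s => (mul_pos ha (hμ s)).trans_le (hlo s)
  have hb : 0 < b := pos_of_mul_pos_left ((hν 0).trans_le (hhi 0)) (hμ 0).le
  refine ⟨tendsto_weightedMean_zero_of_comparable hf hf₀ hμ hμi hνi ha hlo hhi,
    tendsto_weightedMean_zero_of_comparable (b := a⁻¹) hf hf₀ hν hνi hμi (inv_pos.mpr hb)
      (fun s => ?_) (fun s => ?_)⟩
  · rw [inv_mul_le_iff₀ hb]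
    exact hhi s
  · rw [← inv_mul_le_iff₀ (inv_pos.mpr ha), inv_inv]
    exact hlo s

theorem wpaa0_iff_of_comparable {n : ℕ} {ψ : ℝ → (Fin n → ℝ)}
    (hμ : ∀ s, 0 < μ s) (hμi : LocallyIntegrable μ volume) (hνi : LocallyIntegrable ν volume)
    (ha : 0 < a) (hlo : ∀ s, a * μ s ≤ ν s) (hhi : ∀ s, ν s ≤ b * μ s) :
    WPAA0 ν ψ ↔ WPAA0 μ ψ :=
  and_congr_right fun hψ => and_congr_right fun _ =>
    tendsto_weightedMean_zero_iff_of_comparable hψ.norm (fun _ => norm_nonneg _) hμ hμi hνi ha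
      hlo hhi

end Comparable

theorem stmt_10_general {n : ℕ} (ν₁ ν₂ : ℝ → ℝ)
    (hν₂pos : ∀ s, 0 < ν₂ s)
    (hν₁loc : LocallyIntegrable ν₁ volume) (hν₂loc : LocallyIntegrable ν₂ volume)
    (hub : ∃ b : ℝ, ∀ s, ν₁ s / ν₂ s ≤ b)
    (hlb : ∃ a : ℝ, 0 < a ∧ ∀ s, a ≤ ν₁ s / ν₂ s)
    (φ : ℝ → (Fin n → ℝ)) (hφc : Continuous φ) :
    ((Tendsto (fun r : ℝ =>
        (∫ s in (-r)..r, ‖φ s‖ * ν₁ s) / (∫ s in (-r)..r, ν₁ s)) atTop (nhds 0))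
      ↔
     (Tendsto (fun r : ℝ =>
        (∫ s in (-r)..r, ‖φ s‖ * ν₂ s) / (∫ s in (-r)..r, ν₂ s)) atTop (nhds 0)))
    ∧
    ({F : ℝ → (Fin n → ℝ) | ∃ g ψ, AlmostAutomorphic g ∧ WPAA0 ν₁ ψ ∧ ∀ t, F t = g t + ψ t}
      = {F : ℝ → (Fin n → ℝ) | ∃ g ψ, AlmostAutomorphic g ∧ WPAA0 ν₂ ψ ∧ ∀ t, F t = g t + ψ t}) := by
  obtain ⟨b, hb⟩ := hub
  obtain ⟨a, ha, hab⟩ := hlb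
  have hlo : ∀ s, a * ν₂ s ≤ ν₁ s := fun s => (le_div_iff₀ (hν₂pos s)).mp (hab s)
  have hhi : ∀ s, ν₁ s ≤ b * ν₂ s := fun s => (div_le_iff₀ (hν₂pos s)).mp (hb s)
  refine ⟨tendsto_weightedMean_zero_iff_of_comparable hφc.norm (fun _ => norm_nonneg _)
    hν₂pos hν₂loc hν₁loc ha hlo hhi, ?_⟩
  ext F
  simp only [Set.mem_ofPred_eq, wpaa0_iff_of_comparable hν₂pos hν₂loc hν₁loc ha hlo hhi]

theorem stmt_10 {n : ℕ} (ν₁ ν₂ : ℝ → ℝ)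
    (hν₁pos : ∀ s, 0 < ν₁ s) (hν₂pos : ∀ s, 0 < ν₂ s)
    (hν₁loc : LocallyIntegrable ν₁ volume) (hν₂loc : LocallyIntegrable ν₂ volume)
    (hm₁ : Tendsto (fun r : ℝ => ∫ s in (-r)..r, ν₁ s) atTop atTop)
    (hm₂ : Tendsto (fun r : ℝ => ∫ s in (-r)..r, ν₂ s) atTop atTop)
    (hub : ∃ b : ℝ, ∀ s, ν₁ s / ν₂ s ≤ b)
    (hlb : ∃ a : ℝ, 0 < a ∧ ∀ s, a ≤ ν₁ s / ν₂ s)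
    (φ : ℝ → (Fin n → ℝ)) (hφc : Continuous φ) (hφb : ∃ C : ℝ, ∀ t, ‖φ t‖ ≤ C) :
    ((Tendsto (fun r : ℝ =>
        (∫ s in (-r)..r, ‖φ s‖ * ν₁ s) / (∫ s in (-r)..r, ν₁ s)) atTop (nhds 0))
      ↔
     (Tendsto (fun r : ℝ =>
        (∫ s in (-r)..r, ‖φ s‖ * ν₂ s) / (∫ s in (-r)..r, ν₂ s)) atTop (nhds 0)))
    ∧
    ({F : ℝ → (Fin n → ℝ) | ∃ g ψ, AlmostAutomorphic g ∧ WPAA0 ν₁ ψ ∧ ∀ t, F t = g t + ψ t}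
      = {F : ℝ → (Fin n → ℝ) | ∃ g ψ, AlmostAutomorphic g ∧ WPAA0 ν₂ ψ ∧ ∀ t, F t = g t + ψ t}) :=
  stmt_10_general ν₁ ν₂ hν₂pos hν₁loc hν₂loc hub hlb φ hφc
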